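/- Let 𝓑 be a full subcategory of the category of finite sets containing at least one set with at least three elements, and let X be any set. Then the map sending an ultrafilter U on X to the family of functions ((f : X → B) ↦ ∫_X f dU), indexed by the objects B of 𝓑, is a bijection from the set of ultrafilters on X onto the set of natural transformations from the functor 𝓑 → Set, B ↦ (X → B), to the inclusion functor 𝓑 → Set. -/

import Mathlib

open CategoryTheory

universe u

/-- The functor `𝓑 → Set` sending `B ↦ (X → B)`, where `𝓑` is the full subcategory of
finite sets on the property `P`. -/
def homIntoFunctor (X : Type u) (P : FintypeCat.{u} → Prop) :
    ObjectProperty.FullSubcategory P ⥤ Type u where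
  obj B := X → B.obj
  map θ := TypeCat.ofHom fun f => θ ∘ f

/-- The inclusion functor `𝓑 → Set`. -/
def subIncl (P : FintypeCat.{u} → Prop) : ObjectProperty.FullSubcategory P ⥤ Type u :=
  ObjectProperty.ι P ⋙ FintypeCat.incl

instance subIncl_finite {P : FintypeCat.{u} → Prop} (B : ObjectProperty.FullSubcategory P) :
    Finite ((subIncl P).obj B) :=
  inferInstanceAs (Finite B.obj)

section UInt

variable {X : Type u}

private lemma uInt_exists (U : Ultrafilter X) {B : Type u} [Finite B] (f : X → B) :
    ∃ b, f ⁻¹' {b} ∈ U := by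
  by_contra h
  push_neg at h
  have h1 : ∀ b, (f ⁻¹' {b})ᶜ ∈ U := fun b => Ultrafilter.compl_mem_iff_notMem.2 (h b)
  have h2 : (⋂ b, (f ⁻¹' {b})ᶜ) ∈ U := Filter.iInter_mem.2 h1
  have h3 : (⋂ b, (f ⁻¹' {b})ᶜ) = ∅ := by
    ext x
    simp only [Set.mem_iInter, Set.mem_compl_iff, Set.mem_preimage, Set.mem_singleton_iff,
      Set.mem_empty_iff_false, iff_false, not_forall, not_not]
    exact ⟨f x, rfl⟩
  rw [h3] at h2
  exact Filter.empty_notMem (U : Filter X) h2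

/-- The integral of a function with finite codomain against an ultrafilter. -/
noncomputable def uInt (U : Ultrafilter X) {B : Type u} [Finite B] (f : X → B) : B :=
  (uInt_exists U f).choose

lemma uInt_mem (U : Ultrafilter X) {B : Type u} [Finite B] (f : X → B) :
    f ⁻¹' {uInt U f} ∈ U := (uInt_exists U f).choose_spec

lemma uInt_eq (U : Ultrafilter X) {B : Type u} [Finite B] {f : X → B} {b : B}
    (h : f ⁻¹' {b} ∈ U) : uInt U f = b := by
  by_contra hne
  have h2 : f ⁻¹' {uInt U f} ∩ f ⁻¹' {b} ∈ U := Filter.inter_mem (uInt_mem U f) h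
  have h3 : f ⁻¹' {uInt U f} ∩ f ⁻¹' {b} = ∅ := by
    ext x
    simp only [Set.mem_inter_iff, Set.mem_preimage, Set.mem_singleton_iff,
      Set.mem_empty_iff_false, iff_false, not_and]
    intro h1 h2
    exact hne (h1 ▸ h2)
  rw [h3] at h2
  exact Filter.empty_notMem (U : Filter X) h2

end UInt

/-- Let `𝓑` be a full subcategory of the category of finite sets containing at least one
set with at least three elements, and let `X` be any set.  The map sending an ultrafilter
`U` on `X` to the family of functions `(f : X → B) ↦ ∫_X f dU` (the unique `b : B` with
`f ⁻¹' {b} ∈ U`), indexed by the objects `B` of `𝓑`, is a bijection from the set of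
ultrafilters on `X` onto the set of natural transformations from `B ↦ (X → B)` to the
inclusion `𝓑 → Set`. -/
theorem stmt0 (X : Type u) (P : FintypeCat.{u} → Prop)
    (hP : ∃ B₀ : FintypeCat.{u}, P B₀ ∧ 3 ≤ @Fintype.card B₀ FintypeCat.fintype) :
    ∃ Φ : Ultrafilter X ≃ (homIntoFunctor X P ⟶ subIncl P),
      ∀ (U : Ultrafilter X) (B : ObjectProperty.FullSubcategory P) (f : X → B.obj),
        f ⁻¹' {(Φ U).app B f} ∈ U := by
  classical
  obtain ⟨B₀, hPB₀, hcard⟩ := hP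
  letI : Fintype B₀ := FintypeCat.fintype
  obtain ⟨e⟩ : Nonempty (Fin 3 ↪ B₀) :=
    Function.Embedding.nonempty_of_card_le (by simpa using hcard)
  set B₀' : ObjectProperty.FullSubcategory P := ⟨B₀, hPB₀⟩ with hB₀'
  set b0 : B₀ := e 0 with hb0
  set b1 : B₀ := e 1 with hb1
  set b2 : B₀ := e 2 with hb2
  have ne10 : b1 ≠ b0 := fun h => by simpa using e.injective h
  have ne12 : b1 ≠ b2 := fun h => by simpa using e.injective h
  have ne20 : b2 ≠ b0 := fun h => by simpa using e.injective h
  -- the forward map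
  let Φ₀ : Ultrafilter X → (homIntoFunctor X P ⟶ subIncl P) := fun U =>
    { app := fun B => TypeCat.ofHom fun f => (uInt U f : B.obj)
      naturality := by
        intro B C θ
        ext f
        show uInt U (θ ∘ f) = θ (uInt U f)
        refine uInt_eq U (Filter.mem_of_superset (uInt_mem U f) ?_)
        intro x hx
        simp only [Set.mem_preimage, Set.mem_singleton_iff] at hx ⊢
        exact congrArg (ConcreteCategory.hom θ) hx }
  have hΦ₀ : ∀ (U : Ultrafilter X) (B : ObjectProperty.FullSubcategory P) (f : X → B.obj),
      (Φ₀ U).app B f = uInt U f := fun _ _ _ => rfl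
  -- characteristic functions with values in B₀
  let χ : Set X → (X → B₀) := fun A x => if x ∈ A then b1 else b0
  have hχmem : ∀ (U : Ultrafilter X) (A : Set X), A ∈ U → uInt U (χ A) = b1 := by
    intro U A hA
    refine uInt_eq U (Filter.mem_of_superset hA ?_)
    intro x hx
    simp only [Set.mem_preimage, Set.mem_singleton_iff, χ, if_pos hx]
  -- injectivity
  have hsub : ∀ U V : Ultrafilter X, Φ₀ U = Φ₀ V → ∀ A : Set X, A ∈ U → A ∈ V := by
    intro U V h A hA
    by_contra hAV
    have hAV' : Aᶜ ∈ V := Ultrafilter.compl_mem_iff_notMem.2 hAV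
    have h1 : uInt U (χ A) = b1 := hχmem U A hA
    have h2 : uInt V (χ A) = b0 := by
      refine uInt_eq V (Filter.mem_of_superset hAV' ?_)
      intro x hx
      simp only [Set.mem_compl_iff] at hx
      simp only [Set.mem_preimage, Set.mem_singleton_iff, χ, if_neg hx]
    have h3 : uInt U (χ A) = uInt V (χ A) := by
      have h4 := congrArg (fun β : homIntoFunctor X P ⟶ subIncl P => β.app B₀' (χ A)) h
      exact h4
    rw [h1, h2] at h3
    exact ne10 h3
  have hinj : Function.Injective Φ₀ := by
    intro U V h
    apply Ultrafilter.coe_injective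
    apply Filter.ext
    intro A
    exact ⟨hsub U V h A, hsub V U h.symm A⟩
  -- surjectivity
  have hsurj : Function.Surjective Φ₀ := by
    intro α
    have nat : ∀ (B C : ObjectProperty.FullSubcategory P) (θ : B.obj → C.obj) (f : X → B.obj),
        α.app C (θ ∘ f) = θ (α.app B f) := by
      intro B C θ f
      exact congrArg (fun (g : (homIntoFunctor X P).obj B ⟶ (subIncl P).obj C) => g f)
        (α.naturality (ObjectProperty.homMk (FintypeCat.homMk θ) : B ⟶ C))
    set A₀ : (X → B₀) → B₀ := ⇑(α.app B₀') with hA₀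
    have natE : ∀ (θ : B₀ → B₀) (f : X → B₀), A₀ (θ ∘ f) = θ (A₀ f) :=
      fun θ f => nat B₀' B₀' θ f
    -- the candidate ultrafilter's sets
    set S : Set (Set X) := {A | A₀ (χ A) = b1} with hS
    have hrange : ∀ A : Set X, A₀ (χ A) = b0 ∨ A₀ (χ A) = b1 := by
      intro A
      have hθ : (fun b => if b = b1 then b1 else b0) ∘ χ A = χ A := by
        funext x
        by_cases hx : x ∈ A <;> simp [χ, hx, ne10.symm]
      have h2 := natE (fun b => if b = b1 then b1 else b0) (χ A)
      rw [hθ] at h2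
      by_cases hc : A₀ (χ A) = b1
      · exact Or.inr hc
      · left; rw [h2, if_neg hc]
    have huniv : Set.univ ∈ S := by
      have hθ : (fun _ : B₀ => b1) ∘ χ Set.univ = χ Set.univ := by
        funext x; simp [χ]
      have h2 := natE (fun _ => b1) (χ Set.univ)
      rw [hθ] at h2
      exact h2
    have hmono : ∀ A C : Set X, A ∈ S → A ⊆ C → C ∈ S := by
      intro A C hA hAC
      set g : X → B₀ := fun x => if x ∈ A then b1 else if x ∈ C then b2 else b0 with hg
      have h1 : (fun b => if b = b1 then b1 else b0) ∘ g = χ A := by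
        funext x
        by_cases hx : x ∈ A
        · simp [g, χ, hx]
        · by_cases hx2 : x ∈ C <;> simp [g, χ, hx, hx2, ne12.symm, ne10.symm]
      have h2 := natE (fun b => if b = b1 then b1 else b0) g
      rw [h1] at h2
      have hA' : A₀ (χ A) = b1 := hA
      have hg1 : A₀ g = b1 := by
        by_contra hc
        rw [h2, if_neg hc] at hA'
        exact ne10 hA'.symm
      have h3 : (fun b => if b = b1 ∨ b = b2 then b1 else b0) ∘ g = χ C := by
        funext x
        by_cases hx : x ∈ A
        · simp [g, χ, hx, hAC hx]
        · by_cases hx2 : x ∈ C <;>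
            simp [g, χ, hx, hx2, ne10.symm, ne20.symm]
      have h4 := natE (fun b => if b = b1 ∨ b = b2 then b1 else b0) g
      rw [h3, hg1] at h4
      show A₀ (χ C) = b1
      rw [h4]; simp
    have hcompl : ∀ A : Set X, Aᶜ ∈ S ↔ A ∉ S := by
      intro A
      have hsw : (fun b => if b = b0 then b1 else b0) ∘ χ A = χ Aᶜ := by
        funext x
        by_cases hx : x ∈ A <;> simp [χ, hx, ne10]
      have h1 := natE (fun b => if b = b0 then b1 else b0) (χ A)
      rw [hsw] at h1
      constructor
      · intro hAc hA
        have hA' : A₀ (χ A) = b1 := hA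
        have hAc' : A₀ (χ Aᶜ) = b1 := hAc
        rw [h1, hA', if_neg ne10] at hAc'
        exact ne10 hAc'.symm
      · intro hA
        rcases hrange A with h0 | hb
        · show A₀ (χ Aᶜ) = b1
          rw [h1, h0, if_pos rfl]
        · exact absurd hb hA
    have hinter : ∀ A B : Set X, A ∈ S → B ∈ S → A ∩ B ∈ S := by
      intro A B hA hB
      set g : X → B₀ := fun x => if x ∈ A then (if x ∈ B then b1 else b2) else b0 with hg
      have h1 : (fun b => if b = b1 ∨ b = b2 then b1 else b0) ∘ g = χ A := by
        funext x
        by_cases hx : x ∈ A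
        · by_cases hx2 : x ∈ B <;> simp [g, χ, hx, hx2]
        · simp [g, χ, hx, ne10.symm, ne20.symm]
      have h2 := natE (fun b => if b = b1 ∨ b = b2 then b1 else b0) g
      rw [h1] at h2
      have hA' : A₀ (χ A) = b1 := hA
      have hg12 : A₀ g = b1 ∨ A₀ g = b2 := by
        by_contra hc
        push_neg at hc
        rw [h2, if_neg (by tauto)] at hA'
        exact ne10 hA'.symm
      rcases hg12 with hg1 | hg2
      · have h3 : (fun b => if b = b1 then b1 else b0) ∘ g = χ (A ∩ B) := by
          funext x
          by_cases hx : x ∈ A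
          · by_cases hx2 : x ∈ B <;>
              simp [g, χ, hx, hx2, Set.mem_inter_iff, ne12.symm, ne10.symm]
          · simp [g, χ, hx, Set.mem_inter_iff, ne10.symm]
        have h4 := natE (fun b => if b = b1 then b1 else b0) g
        rw [h3, hg1] at h4
        show A₀ (χ (A ∩ B)) = b1
        rw [h4]; simp
      · exfalso
        have h3 : (fun b => if b = b2 then b1 else b0) ∘ g = χ (A \ B) := by
          funext x
          by_cases hx : x ∈ A
          · by_cases hx2 : x ∈ B <;>
              simp [g, χ, hx, hx2, Set.mem_diff, ne12, ne20]
          · simp [g, χ, hx, Set.mem_diff, ne20, ne20.symm]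
        have h4 := natE (fun b => if b = b2 then b1 else b0) g
        rw [h3, hg2, if_pos rfl] at h4
        have hdiff : A \ B ∈ S := h4
        have hBc : Bᶜ ∈ S := hmono _ _ hdiff (fun x hx => hx.2)
        exact (hcompl B).1 hBc hB
    -- build the ultrafilter
    let F : Filter X :=
      { sets := S
        univ_sets := huniv
        sets_of_superset := fun hA hAC => hmono _ _ hA hAC
        inter_sets := fun hA hB => hinter _ _ hA hB }
    have hmemF : ∀ A : Set X, A ∈ F ↔ A ∈ S := fun A => Iff.rfl
    let U : Ultrafilter X := Ultrafilter.ofComplNotMemIff F (by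
      intro s
      show sᶜ ∉ S ↔ s ∈ S
      rw [hcompl s]
      exact not_not)
    have hmemU : ∀ A : Set X, A ∈ U ↔ A ∈ S := fun A => Iff.rfl
    refine ⟨U, ?_⟩
    apply NatTrans.ext
    funext B
    ext f
    show uInt U f = α.app B f
    refine uInt_eq U ?_
    rw [hmemU]
    have key : χ (f ⁻¹' {α.app B f}) = (fun c : B.obj => if c = α.app B f then b1 else b0) ∘ f := by
      funext x
      exact if_congr Set.mem_singleton_iff rfl rfl
    show A₀ (χ (f ⁻¹' {α.app B f})) = b1
    rw [key, hA₀]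
    rw [nat B B₀' (fun c => if c = α.app B f then b1 else b0) f]
    exact if_pos rfl
  refine ⟨Equiv.ofBijective Φ₀ ⟨hinj, hsurj⟩, fun U B f => ?_⟩
  show f ⁻¹' {uInt U f} ∈ U
  exact uInt_mem U f
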